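/- Let T_n(x) = Σ_{0<|k|≤n} c_k e^{ikx} be a trigonometric polynomial of degree at most n with zero constant term, and α ∈ ℕ. Then the Bernstein inequality ‖T_n^{(α)}‖_p ≤ n^α ‖T_n‖_p holds for 1 ≤ p ≤ ∞, where T_n^{(α)} denotes the α-th derivative. -/

import Mathlib

/-!
Riesz's interpolation formula: with `θ_j = (2j+1)π/(4n)` and
`λ_j = (-1)^j / (4n sin² θ_j)`, every trigonometric polynomial `T` of degree at most `n` satisfies
`T'(x) = ∑_{j<2n} λ_j T(x + 2θ_j)`, and `∑_j |λ_j| = n`. As the `Lᵖ` norm over a period is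
invariant under translation, Minkowski's inequality gives `‖T'‖_p ≤ n ‖T‖_p`, and iterating gives
the theorem. The formula amounts to `∑_j λ_j e^{2ikθ_j} = ik` for `|k| ≤ n`; the real part vanishes
by the symmetry `θ_j ↦ π - θ_j`, and the imaginary part `∑_j λ_j sin(2kθ_j) = k` follows by
induction on `k` from sum-to-product identities.
-/

open MeasureTheory Real Complex Finset

lemma Function.Periodic.eLpNorm_comp_add_right {E : Type*} [NormedAddCommGroup E] {g : ℝ → E}
    {T : ℝ} (hg : Function.Periodic g T) (hT : 0 < T) (hc : Continuous g) (t : ℝ) (p : ENNReal) :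
    eLpNorm (fun x => g (x + t)) p (volume.restrict (Set.Ioc 0 T))
      = eLpNorm g p (volume.restrict (Set.Ioc 0 T)) := by
  have : Fact (0 < T) := ⟨hT⟩
  have hG : Continuous (hg.lift : AddCircle T → E) := continuous_coinduced_dom.mpr hc
  have hmk := zero_add T ▸ AddCircle.measurePreserving_mk T 0
  calc eLpNorm (fun x => g (x + t)) p (volume.restrict (Set.Ioc 0 T))
      = eLpNorm ((fun y => hg.lift (y + (t : AddCircle T))) ∘ (↑)) p
          (volume.restrict (Set.Ioc 0 T)) := rfl
    _ = eLpNorm (fun y => hg.lift (y + (t : AddCircle T))) p volume :=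
      eLpNorm_comp_measurePreserving (hG.comp (continuous_add_const _)).aestronglyMeasurable hmk
    _ = eLpNorm hg.lift p volume :=
      eLpNorm_comp_measurePreserving hG.aestronglyMeasurable (measurePreserving_add_right _ _)
    _ = eLpNorm g p (volume.restrict (Set.Ioc 0 T)) :=
      (eLpNorm_comp_measurePreserving hG.aestronglyMeasurable hmk).symm

lemma neg_one_pow_mul_self (j : ℕ) : ((-1 : ℝ) ^ j) * (-1) ^ j = 1 := by
  rw [← mul_pow]; norm_num

section RieszNodes

noncomputable def rieszAngle (n j : ℕ) : ℝ := (2 * j + 1) * π / (4 * n)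

noncomputable def rieszCoeff (n j : ℕ) : ℝ := (-1) ^ j / (4 * n * Real.sin (rieszAngle n j) ^ 2)

variable {n : ℕ}

lemma rieszAngle_pos (hn : 0 < n) (j : ℕ) : 0 < rieszAngle n j := by
  unfold rieszAngle; positivity

lemma rieszAngle_lt_pi (hn : 0 < n) {j : ℕ} (hj : j < 2 * n) : rieszAngle n j < π := by
  have hj' : (j : ℝ) + 1 ≤ 2 * n := by exact_mod_cast hj
  unfold rieszAngle
  rw [div_lt_iff₀ (by positivity)]
  nlinarith [pi_pos]

lemma sin_rieszAngle_pos (hn : 0 < n) {j : ℕ} (hj : j < 2 * n) : 0 < Real.sin (rieszAngle n j) :=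
  sin_pos_of_pos_of_lt_pi (rieszAngle_pos hn j) (rieszAngle_lt_pi hn hj)

lemma rieszAngle_reflect (hn : 0 < n) {j : ℕ} (hj : j < 2 * n) :
    rieszAngle n (2 * n - 1 - j) = π - rieszAngle n j := by
  have hcast : ((2 * n - 1 - j : ℕ) : ℝ) = 2 * n - 1 - j := by
    rw [Nat.cast_sub (by omega), Nat.cast_sub (by omega)]; push_cast; ring
  unfold rieszAngle
  rw [hcast]
  field_simp
  ring

lemma two_mul_mul_rieszAngle (hn : 0 < n) (j : ℕ) :
    2 * n * rieszAngle n j = j * π + π / 2 := by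
  unfold rieszAngle
  field_simp
  ring

lemma sin_two_mul_mul_rieszAngle (hn : 0 < n) (j : ℕ) :
    Real.sin (2 * n * rieszAngle n j) = (-1) ^ j := by
  rw [two_mul_mul_rieszAngle hn, Real.sin_add_pi_div_two, Real.cos_nat_mul_pi]

lemma cos_two_mul_add_one_mul_rieszAngle (hn : 0 < n) (j : ℕ) :
    Real.cos ((2 * n + 1) * rieszAngle n j) = -((-1) ^ j * Real.sin (rieszAngle n j)) := by
  rw [add_mul, two_mul_mul_rieszAngle hn, one_mul,
    show j * π + π / 2 + rieszAngle n j = rieszAngle n j + π / 2 + j * π by ring,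
    Real.cos_add_nat_mul_pi, Real.cos_add_pi_div_two]
  ring

lemma rieszCoeff_reflect (hn : 0 < n) {j : ℕ} (hj : j < 2 * n) :
    rieszCoeff n (2 * n - 1 - j) = -rieszCoeff n j := by
  have hsign : ((-1 : ℝ) ^ (2 * n - 1 - j)) * (-1) ^ j = -1 := by
    rw [← pow_add, show 2 * n - 1 - j + j = 2 * (n - 1) + 1 by omega, pow_succ, pow_mul]
    norm_num
  have hsin := (sin_rieszAngle_pos hn hj).ne'
  unfold rieszCoeff
  rw [rieszAngle_reflect hn hj, Real.sin_pi_sub]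
  field_simp
  linear_combination (-1) ^ j * hsign - (-1) ^ (2 * n - 1 - j) * neg_one_pow_mul_self j

noncomputable def altSinSum (n m : ℕ) : ℝ :=
  ∑ j ∈ range (2 * n), (-1) ^ j * Real.sin (2 * m * rieszAngle n j)

noncomputable def altCosDivSinSum (n m : ℕ) : ℝ :=
  ∑ j ∈ range (2 * n),
    (-1) ^ j * Real.cos ((2 * m + 1) * rieszAngle n j) / Real.sin (rieszAngle n j)

lemma altSinSum_eq_zero {m : ℕ} (hm : 0 < m) (hmn : m < n) : altSinSum n m = 0 := by
  have hn : 0 < n := hm.trans hmn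
  set a : ℝ := m * π / n
  have hcos : 0 < Real.cos (a / 2) := by
    have : (m : ℝ) < n := by exact_mod_cast hmn
    apply cos_pos_of_mem_Ioo
    constructor
    · have : 0 < a := by positivity
      linarith [pi_pos]
    · rw [div_lt_div_iff_of_pos_right two_pos, div_lt_iff₀ (by positivity)]
      nlinarith [pi_pos]
  -- `2 cos (a/2)` times the `j`-th term telescopes, with `u j = (-1)^j sin (j a)`.
  set u : ℕ → ℝ := fun j => (-1) ^ j * Real.sin (j * a)
  have hterm (j : ℕ) : 2 * Real.cos (a / 2) * ((-1) ^ j * Real.sin (2 * m * rieszAngle n j))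
      = u j - u (j + 1) := by
    have harg : 2 * m * rieszAngle n j = j * a + a / 2 := by
      unfold rieszAngle a; field_simp; ring
    have hsum : Real.sin ((j + 1 : ℕ) * a) + Real.sin (j * a)
        = 2 * Real.sin (j * a + a / 2) * Real.cos (a / 2) := by
      rw [Real.sin_add_sin]; push_cast; ring_nf
    simp only [u, harg, pow_succ]
    linear_combination -(-1) ^ j * hsum
  have hend : u (2 * n) = 0 := by
    simp only [u]
    rw [show ((2 * n : ℕ) : ℝ) * a = (2 * m : ℕ) * π by unfold a; push_cast; field_simp,
      Real.sin_nat_mul_pi, mul_zero]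
  have h := sum_range_sub' u (2 * n)
  rw [← sum_congr rfl fun j _ => hterm j, ← mul_sum, hend] at h
  simpa [u, altSinSum, hcos.ne'] using h

lemma altSinSum_self (hn : 0 < n) : altSinSum n n = 2 * n := by
  simp only [altSinSum, sin_two_mul_mul_rieszAngle hn, neg_one_pow_mul_self, sum_const,
    card_range, nsmul_eq_mul, mul_one]
  push_cast; ring

lemma altCosDivSinSum_succ (hn : 0 < n) (m : ℕ) :
    altCosDivSinSum n (m + 1) = altCosDivSinSum n m - 2 * altSinSum n (m + 1) := by
  simp only [altCosDivSinSum, altSinSum, mul_sum, ← sum_sub_distrib]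
  refine sum_congr rfl fun j hj => ?_
  have hsin := (sin_rieszAngle_pos hn (mem_range.1 hj)).ne'
  have hdiff := Real.cos_sub_cos ((2 * (m + 1 : ℕ) + 1) * rieszAngle n j)
    ((2 * m + 1) * rieszAngle n j)
  push_cast at hdiff ⊢
  field_simp
  ring_nf at hdiff ⊢
  linear_combination hdiff

lemma altCosDivSinSum_self (hn : 0 < n) : altCosDivSinSum n n = -(2 * n) := by
  have hterm : ∀ j ∈ range (2 * n),
      (-1) ^ j * Real.cos ((2 * n + 1) * rieszAngle n j) / Real.sin (rieszAngle n j) = -1 := by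
    intro j hj
    have hsin := (sin_rieszAngle_pos hn (mem_range.1 hj)).ne'
    rw [cos_two_mul_add_one_mul_rieszAngle hn, mul_neg, ← mul_assoc, neg_one_pow_mul_self,
      one_mul, neg_div, div_self hsin]
  rw [altCosDivSinSum, sum_congr rfl hterm]
  simp

lemma altCosDivSinSum_of_lt (hn : 0 < n) {m : ℕ} (hm : m < n) : altCosDivSinSum n m = 2 * n := by
  have hconst : ∀ m < n, altCosDivSinSum n m = altCosDivSinSum n 0 := by
    intro m
    induction m with
    | zero => simp
    | succ m ih =>
      intro hm
      rw [altCosDivSinSum_succ hn, altSinSum_eq_zero m.succ_pos hm, ih (by omega)]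
      ring
  obtain ⟨k, rfl⟩ : ∃ k, n = k + 1 := ⟨n - 1, by omega⟩
  have h := altCosDivSinSum_succ hn k
  rw [altCosDivSinSum_self hn, altSinSum_self hn, hconst k k.lt_succ_self] at h
  rw [hconst m hm]
  linarith

lemma sum_rieszCoeff_mul_sin_succ (hn : 0 < n) (k : ℕ) :
    ∑ j ∈ range (2 * n), rieszCoeff n j * Real.sin (2 * (k + 1 : ℕ) * rieszAngle n j)
      = ∑ j ∈ range (2 * n), rieszCoeff n j * Real.sin (2 * k * rieszAngle n j)
        + altCosDivSinSum n k / (2 * n) := by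
  simp only [altCosDivSinSum, sum_div, ← sum_add_distrib]
  refine sum_congr rfl fun j hj => ?_
  have hsin := (sin_rieszAngle_pos hn (mem_range.1 hj)).ne'
  have hdiff := Real.sin_sub_sin (2 * (k + 1 : ℕ) * rieszAngle n j) (2 * k * rieszAngle n j)
  push_cast at hdiff ⊢
  unfold rieszCoeff
  field_simp
  ring_nf at hdiff ⊢
  linear_combination 2 * hdiff

lemma sum_rieszCoeff_mul_sin_nat (hn : 0 < n) {k : ℕ} (hk : k ≤ n) :
    ∑ j ∈ range (2 * n), rieszCoeff n j * Real.sin (2 * k * rieszAngle n j) = k := by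
  induction k with
  | zero => simp
  | succ k ih =>
    rw [sum_rieszCoeff_mul_sin_succ hn, ih (by omega), altCosDivSinSum_of_lt hn (by omega)]
    field_simp
    push_cast; ring

lemma sum_rieszCoeff_mul_sin (hn : 0 < n) {k : ℤ} (hk : |k| ≤ n) :
    ∑ j ∈ range (2 * n), rieszCoeff n j * Real.sin (2 * k * rieszAngle n j) = k := by
  obtain ⟨m, rfl | rfl⟩ := Int.eq_nat_or_neg k
  · have hm : m ≤ n := by simpa using hk
    exact_mod_cast sum_rieszCoeff_mul_sin_nat hn hm
  · have hm : m ≤ n := by simpa using hk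
    simp only [Int.cast_neg, Int.cast_natCast, mul_neg, neg_mul, Real.sin_neg, sum_neg_distrib,
      sum_rieszCoeff_mul_sin_nat hn hm]

lemma sum_rieszCoeff_mul_cos (hn : 0 < n) (k : ℤ) :
    ∑ j ∈ range (2 * n), rieszCoeff n j * Real.cos (2 * k * rieszAngle n j) = 0 := by
  -- The reflection `j ↦ 2n - 1 - j` reverses the sign of every term.
  have hrefl := sum_range_reflect (fun j => rieszCoeff n j * Real.cos (2 * k * rieszAngle n j))
    (2 * n)
  have hterm : ∀ j ∈ range (2 * n),
      rieszCoeff n (2 * n - 1 - j) * Real.cos (2 * k * rieszAngle n (2 * n - 1 - j))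
        = -(rieszCoeff n j * Real.cos (2 * k * rieszAngle n j)) := by
    intro j hj
    have hj := mem_range.1 hj
    rw [rieszCoeff_reflect hn hj, rieszAngle_reflect hn hj,
      show 2 * (k : ℝ) * (π - rieszAngle n j) = k * (2 * π) - 2 * k * rieszAngle n j by ring,
      Real.cos_int_mul_two_pi_sub, neg_mul]
  rw [sum_congr rfl hterm, sum_neg_distrib] at hrefl
  linarith

lemma sum_rieszCoeff_mul_exp (hn : 0 < n) {k : ℤ} (hk : |k| ≤ n) :
    ∑ j ∈ range (2 * n), (rieszCoeff n j : ℂ) * Complex.exp (I * k * (2 * rieszAngle n j : ℝ))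
      = I * k := by
  have hterm : ∀ j ∈ range (2 * n),
      (rieszCoeff n j : ℂ) * Complex.exp (I * k * (2 * rieszAngle n j : ℝ))
        = (rieszCoeff n j * Real.cos (2 * k * rieszAngle n j) : ℝ)
          + (rieszCoeff n j * Real.sin (2 * k * rieszAngle n j) : ℝ) * I := by
    intro j _
    rw [show I * k * (2 * rieszAngle n j : ℝ) = (2 * k * rieszAngle n j : ℝ) * I by
      push_cast; ring, Complex.exp_mul_I, ← Complex.ofReal_cos, ← Complex.ofReal_sin]
    push_cast
    ring
  rw [sum_congr rfl hterm, sum_add_distrib, ← sum_mul, ← Complex.ofReal_sum, ← Complex.ofReal_sum,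
    sum_rieszCoeff_mul_cos hn, sum_rieszCoeff_mul_sin hn hk]
  push_cast
  ring

lemma sum_abs_rieszCoeff (hn : 0 < n) : ∑ j ∈ range (2 * n), |rieszCoeff n j| = n := by
  -- As `sin (2 n θ_j) = (-1)^j`, this is the case `k = n` of the sine sum.
  have hterm : ∀ j ∈ range (2 * n),
      |rieszCoeff n j| = rieszCoeff n j * Real.sin (2 * n * rieszAngle n j) := by
    intro j hj
    have hsin := sin_rieszAngle_pos hn (mem_range.1 hj)
    rw [sin_two_mul_mul_rieszAngle hn, rieszCoeff, abs_div, abs_neg_one_pow,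
      abs_of_pos (by positivity), div_mul_eq_mul_div, neg_one_pow_mul_self]
  rw [sum_congr rfl hterm, sum_rieszCoeff_mul_sin_nat hn le_rfl]

lemma sum_enorm_rieszCoeff (hn : 0 < n) : ∑ j ∈ range (2 * n), ‖rieszCoeff n j‖ₑ = n := by
  simp only [Real.enorm_eq_ofReal_abs]
  rw [← ENNReal.ofReal_sum_of_nonneg fun j _ => abs_nonneg _, sum_abs_rieszCoeff hn,
    ENNReal.ofReal_natCast]

end RieszNodes

section TrigPoly

noncomputable def trigPoly (n : ℕ) (c : ℤ → ℂ) (x : ℝ) : ℂ :=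
  ∑ k ∈ Icc (-(n : ℤ)) n, c k * Complex.exp (I * k * x)

variable {n : ℕ}

lemma hasDerivAt_trigPoly (c : ℤ → ℂ) (x : ℝ) :
    HasDerivAt (trigPoly n c) (trigPoly n (fun k => I * k * c k) x) x := by
  refine HasDerivAt.fun_sum fun k _ => ?_
  have h := (((hasDerivAt_id x).ofReal_comp.const_mul (I * k)).cexp).const_mul (c k)
  simp only [id, Complex.ofReal_one, mul_one] at h
  exact h.congr_deriv (by ring)

lemma deriv_trigPoly (c : ℤ → ℂ) : deriv (trigPoly n c) = trigPoly n (fun k => I * k * c k) :=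
  funext fun x => (hasDerivAt_trigPoly c x).deriv

lemma continuous_trigPoly (c : ℤ → ℂ) : Continuous (trigPoly n c) := by
  unfold trigPoly; fun_prop

lemma periodic_trigPoly (c : ℤ → ℂ) : Function.Periodic (trigPoly n c) (2 * π) := by
  intro x
  refine sum_congr rfl fun k _ => ?_
  rw [show I * k * ((x + 2 * π : ℝ) : ℂ) = I * k * x + k * (2 * π * I) by push_cast; ring,
    Complex.exp_add, Complex.exp_int_mul_two_pi_mul_I, mul_one]

lemma trigPoly_I_mul_eq_sum_rieszCoeff (hn : 0 < n) (c : ℤ → ℂ) (x : ℝ) :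
    trigPoly n (fun k => I * k * c k) x
      = ∑ j ∈ range (2 * n), (rieszCoeff n j : ℂ) * trigPoly n c (x + 2 * rieszAngle n j) := by
  simp only [trigPoly, mul_sum]
  rw [sum_comm]
  refine sum_congr rfl fun k hk => ?_
  calc I * k * c k * Complex.exp (I * k * x)
      = c k * Complex.exp (I * k * x) * ∑ j ∈ range (2 * n),
          (rieszCoeff n j : ℂ) * Complex.exp (I * k * (2 * rieszAngle n j : ℝ)) := by
        rw [sum_rieszCoeff_mul_exp hn (abs_le.2 (mem_Icc.1 hk))]; ring
    _ = _ := by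
        rw [mul_sum]
        refine sum_congr rfl fun j _ => ?_
        rw [Complex.ofReal_add, mul_add, Complex.exp_add]
        ring

lemma eLpNorm_trigPoly_I_mul_le (hn : 0 < n) (c : ℤ → ℂ) {p : ENNReal} (hp : 1 ≤ p) :
    eLpNorm (trigPoly n (fun k => I * k * c k)) p (volume.restrict (Set.Ioc 0 (2 * π)))
      ≤ n * eLpNorm (trigPoly n c) p (volume.restrict (Set.Ioc 0 (2 * π))) := by
  set μ := volume.restrict (Set.Ioc (0 : ℝ) (2 * π))
  set shift : ℕ → ℝ → ℂ := fun j x => trigPoly n c (x + 2 * rieszAngle n j)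
  have hriesz :
      trigPoly n (fun k => I * k * c k) = ∑ j ∈ range (2 * n), rieszCoeff n j • shift j := by
    funext x
    simp only [trigPoly_I_mul_eq_sum_rieszCoeff hn, Finset.sum_apply, Pi.smul_apply,
      Complex.real_smul, shift]
  have hshift (j : ℕ) : eLpNorm (shift j) p μ = eLpNorm (trigPoly n c) p μ :=
    (periodic_trigPoly c).eLpNorm_comp_add_right two_pi_pos (continuous_trigPoly c) _ p
  have hmeas (j : ℕ) : AEStronglyMeasurable (rieszCoeff n j • shift j) μ :=
    (((continuous_trigPoly c).comp (continuous_add_const _)).aestronglyMeasurable).const_smul _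
  calc eLpNorm (trigPoly n (fun k => I * k * c k)) p μ
      ≤ ∑ j ∈ range (2 * n), eLpNorm (rieszCoeff n j • shift j) p μ :=
        hriesz ▸ eLpNorm_sum_le (fun j _ => hmeas j) hp
    _ = ∑ j ∈ range (2 * n), ‖rieszCoeff n j‖ₑ * eLpNorm (trigPoly n c) p μ := by
        simp only [eLpNorm_const_smul, hshift]
    _ = n * eLpNorm (trigPoly n c) p μ := by rw [← sum_mul, sum_enorm_rieszCoeff hn]

end TrigPoly

theorem bernstein_inequality_general (n : ℕ) (hn : 0 < n) (α : ℕ) (c : ℤ → ℂ)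
    (p : ENNReal) (hp : 1 ≤ p) :
    eLpNorm
        (iteratedDeriv α (fun x : ℝ =>
          ∑ k ∈ Finset.Icc (-(n:ℤ)) (n:ℤ), c k * Complex.exp (Complex.I * k * x)))
        p (volume.restrict (Set.Ioc (0:ℝ) (2 * π)))
      ≤ (n : ENNReal) ^ α *
        eLpNorm (fun x : ℝ =>
          ∑ k ∈ Finset.Icc (-(n:ℤ)) (n:ℤ), c k * Complex.exp (Complex.I * k * x))
        p (volume.restrict (Set.Ioc (0:ℝ) (2 * π))) := by
  change eLpNorm (iteratedDeriv α (trigPoly n c)) p _ ≤ _ * eLpNorm (trigPoly n c) p _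
  induction α generalizing c with
  | zero => simp
  | succ α ih =>
    rw [iteratedDeriv_succ', deriv_trigPoly, pow_succ, mul_assoc]
    exact (ih _).trans (mul_le_mul_right (eLpNorm_trigPoly_I_mul_le hn c hp) _)

/-- Bernstein's inequality ‖T_n^{(α)}‖_p ≤ n^α ‖T_n‖_p, 1 ≤ p ≤ ∞, for trigonometric
polynomials T_n(x) = Σ_{0<|k|≤n} c_k e^{ikx} with zero constant term, α ∈ ℕ. -/
theorem bernstein_inequality (n : ℕ) (hn : 0 < n) (α : ℕ) (c : ℤ → ℂ) (hc0 : c 0 = 0)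
    (p : ENNReal) (hp : 1 ≤ p) :
    eLpNorm
        (iteratedDeriv α (fun x : ℝ =>
          ∑ k ∈ Finset.Icc (-(n:ℤ)) (n:ℤ), c k * Complex.exp (Complex.I * k * x)))
        p (volume.restrict (Set.Ioc (0:ℝ) (2 * π)))
      ≤ (n : ENNReal) ^ α *
        eLpNorm (fun x : ℝ =>
          ∑ k ∈ Finset.Icc (-(n:ℤ)) (n:ℤ), c k * Complex.exp (Complex.I * k * x))
        p (volume.restrict (Set.Ioc (0:ℝ) (2 * π))) :=
  bernstein_inequality_general n hn α c p hp
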